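/- For coprime positive integers a,b>1 and k≥1, the Frobenius number of the numerical semigroup generated by {a^{k−i}b^i : 0≤i≤k} equals ab·σ(a,b;k−1) − σ(a,b;k), where σ(a,b;m) = Σ_{i=0}^m a^{m−i}b^i. -/

import Mathlib

/-!
Write `S_k` for the semigroup generated by `a^(k-i) b^i`, `i ≤ k`. Then
`S_{k+1} = a • S_k + ℕ b^(k+1)`, and `S_k` is closed under adding multiples of `b^(k+1)`.
For `a` coprime to `c ≥ 0`, passing from a semigroup `T` with Frobenius number `F` to
`a • T + ℕ c` turns the Frobenius number into `a F + (a - 1) c`: every integer is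
`a x + t c` with a unique `0 ≤ t < a`, and it lies in `a • T + ℕ c` iff `x ∈ T`.
Starting from `S_0 = ℕ` with Frobenius number `-1`, this recursion is solved by
`ab σ(a,b;k-1) - σ(a,b;k)`.
-/

open Finset

theorem isGreatest_compl_scale_add {T : Set ℤ} {F a c : ℤ} (ha : 0 < a) (hc : 0 ≤ c)
    (hac : IsCoprime a c) (hT : ∀ x ∈ T, ∀ s : ℕ, x + s * c ∈ T) (hF : IsGreatest Tᶜ F) :
    IsGreatest {n | ∃ x ∈ T, ∃ t : ℕ, n = a * x + t * c}ᶜ (a * F + (a - 1) * c) := by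
  obtain ⟨hFT, hFmax⟩ := hF
  refine ⟨?_, fun m hm => ?_⟩
  · rintro ⟨x, hx, t, hxt⟩
    obtain ⟨s, hs⟩ : a ∣ t + 1 - a :=
      hac.dvd_of_dvd_mul_right ⟨F - x, by linear_combination -hxt⟩
    have hs0 : 0 ≤ s := by nlinarith
    lift s to ℕ using hs0
    have hFx : F = x + s * c := by
      apply mul_left_cancel₀ ha.ne'
      linear_combination hxt + c * hs
    exact hFT (hFx ▸ hT x hx s)
  · by_contra hmF
    apply hm
    obtain ⟨u, v, huv⟩ := hac
    have ht0 : 0 ≤ m * v % a := Int.emod_nonneg _ ha.ne'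
    have hta : m * v % a < a := Int.emod_lt_of_pos _ ha
    obtain ⟨x, hx⟩ : a ∣ m - m * v % a * c :=
      ⟨m * u + m * v / a * c,
        by linear_combination (-m) * huv - c * Int.mul_ediv_add_emod (m * v) a⟩
    have hxT : x ∈ T := by
      by_contra hxT
      have := hFmax hxT
      nlinarith
    exact ⟨x, hxT, (m * v % a).toNat, by rw [Int.toNat_of_nonneg ht0]; linarith⟩

section GeomFrobenius

variable {R : Type*} [CommRing R]

def geomFrobenius (a b : R) (k : ℕ) : R :=
  a * b * ∑ i ∈ range k, a ^ (k - 1 - i) * b ^ i - ∑ i ∈ range (k + 1), a ^ (k - i) * b ^ i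

theorem geomFrobenius_zero (a b : R) : geomFrobenius a b 0 = -1 := by
  simp [geomFrobenius]

theorem geomFrobenius_succ (a b : R) (k : ℕ) :
    geomFrobenius a b (k + 1) = a * geomFrobenius a b k + (a - 1) * b ^ (k + 1) := by
  have hσ (n : ℕ) : ∑ i ∈ range (n + 1), a ^ (n - i) * b ^ i =
      a * ∑ i ∈ range n, a ^ (n - 1 - i) * b ^ i + b ^ n := by
    simpa only [mul_comm (b ^ _), add_comm (b ^ n)] using geom_sum₂_succ_eq b a (n := n)
  have h₁ := hσ (k + 1)
  simp only [geomFrobenius, Nat.add_sub_cancel] at h₁ ⊢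
  linear_combination -h₁ + a * b * hσ k

end GeomFrobenius

def geomSemigroup (a b : ℕ) (k : ℕ) : AddSubmonoid ℤ :=
  AddSubmonoid.closure
    (Set.range fun i : Fin (k + 1) => (a : ℤ) ^ (k - (i : ℕ)) * (b : ℤ) ^ (i : ℕ))

section GeomSemigroup

variable {a b k : ℕ}

theorem mem_geomSemigroup_iff {n : ℤ} :
    n ∈ geomSemigroup a b k ↔ ∃ c : Fin (k + 1) → ℕ,
      n = ∑ i : Fin (k + 1), (c i : ℤ) * ((a : ℤ) ^ (k - (i : ℕ)) * (b : ℤ) ^ (i : ℕ)) := by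
  simp only [geomSemigroup, AddSubmonoid.mem_closure_range_iff_of_fintype, nsmul_eq_mul]

theorem mem_geomSemigroup_zero_iff {n : ℤ} : n ∈ geomSemigroup a b 0 ↔ 0 ≤ n := by
  simp only [mem_geomSemigroup_iff, Nat.reduceAdd, univ_unique, Fin.default_eq_zero,
    Fin.val_eq_zero, tsub_self, pow_zero, mul_one, sum_singleton]
  exact ⟨fun ⟨c, hc⟩ => hc ▸ Int.natCast_nonneg _,
    fun hn => ⟨fun _ => n.toNat, (Int.toNat_of_nonneg hn).symm⟩⟩

theorem sum_mul_geom_succ (c : Fin (k + 2) → ℕ) :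
    ∑ i : Fin (k + 2), (c i : ℤ) * ((a : ℤ) ^ (k + 1 - (i : ℕ)) * (b : ℤ) ^ (i : ℕ)) =
      a * ∑ i : Fin (k + 1), (c i.castSucc : ℤ) * ((a : ℤ) ^ (k - (i : ℕ)) * (b : ℤ) ^ (i : ℕ)) +
        c (Fin.last _) * (b : ℤ) ^ (k + 1) := by
  rw [Fin.sum_univ_castSucc, mul_sum]
  congr 1
  · refine sum_congr rfl fun i _ => ?_
    rw [Fin.val_castSucc, Nat.sub_add_comm (Nat.lt_succ_iff.mp i.isLt), pow_succ]
    ring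
  · simp

theorem mem_geomSemigroup_succ_iff {n : ℤ} :
    n ∈ geomSemigroup a b (k + 1) ↔
      ∃ x ∈ geomSemigroup a b k, ∃ t : ℕ, n = a * x + t * (b : ℤ) ^ (k + 1) := by
  simp only [mem_geomSemigroup_iff]
  constructor
  · rintro ⟨c, rfl⟩
    exact ⟨_, ⟨_, rfl⟩, _, sum_mul_geom_succ c⟩
  · rintro ⟨_, ⟨c, rfl⟩, t, rfl⟩
    exact ⟨Fin.snoc c t, by simp [sum_mul_geom_succ]⟩

theorem add_mul_pow_succ_mem_geomSemigroup {x : ℤ} (hx : x ∈ geomSemigroup a b k) (s : ℕ) :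
    x + s * (b : ℤ) ^ (k + 1) ∈ geomSemigroup a b k := by
  have hgen : (a : ℤ) ^ (k - k) * (b : ℤ) ^ k ∈ geomSemigroup a b k :=
    AddSubmonoid.subset_closure ⟨Fin.last k, rfl⟩
  convert add_mem hx (AddSubmonoid.nsmul_mem _ hgen (s * b)) using 1
  rw [nsmul_eq_mul, Nat.sub_self, pow_zero]
  push_cast
  ring

theorem isGreatest_compl_geomSemigroup (ha : 0 < a) (hab : Nat.Coprime a b) (k : ℕ) :
    IsGreatest (geomSemigroup a b k : Set ℤ)ᶜ (geomFrobenius (a : ℤ) b k) := by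
  induction k with
  | zero =>
    rw [geomFrobenius_zero]
    refine ⟨?_, fun n hn => ?_⟩ <;>
      simp only [Set.mem_compl_iff, SetLike.mem_coe, mem_geomSemigroup_zero_iff] at * <;> omega
  | succ k ih =>
    have hS : (geomSemigroup a b (k + 1) : Set ℤ) =
        {n | ∃ x ∈ geomSemigroup a b k, ∃ t : ℕ, n = a * x + t * (b : ℤ) ^ (k + 1)} :=
      Set.ext fun _ => mem_geomSemigroup_succ_iff
    rw [hS, geomFrobenius_succ]
    exact isGreatest_compl_scale_add (by positivity) (by positivity)
      (Nat.isCoprime_iff_coprime.mpr hab).pow_right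
      (fun _ => add_mul_pow_succ_mem_geomSemigroup) ih

end GeomSemigroup

theorem geometric_frobenius_general (a b k : ℕ) (ha : 1 < a) (hab : Nat.Coprime a b)
    (F : ℤ)
    (hF : F = (a : ℤ) * (b : ℤ) * (∑ i ∈ Finset.range k, (a : ℤ) ^ (k - 1 - i) * (b : ℤ) ^ i) -
        ∑ i ∈ Finset.range (k + 1), (a : ℤ) ^ (k - i) * (b : ℤ) ^ i) :
    (¬ ∃ c : Fin (k + 1) → ℕ,
        F = ∑ i : Fin (k + 1), (c i : ℤ) * ((a : ℤ) ^ (k - (i : ℕ)) * (b : ℤ) ^ (i : ℕ))) ∧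
      ∀ m : ℤ, F < m →
        ∃ c : Fin (k + 1) → ℕ,
          m = ∑ i : Fin (k + 1), (c i : ℤ) * ((a : ℤ) ^ (k - (i : ℕ)) * (b : ℤ) ^ (i : ℕ)) := by
  subst hF
  obtain ⟨hF_notMem, hF_max⟩ := isGreatest_compl_geomSemigroup (by omega) hab k
  refine ⟨fun hrep => hF_notMem (mem_geomSemigroup_iff.mpr hrep), fun m hm => ?_⟩
  by_contra hrep
  exact hm.not_ge (hF_max (mt mem_geomSemigroup_iff.mp hrep))

/-- For coprime `a, b > 1` and `k ≥ 1`, the Frobenius number of the numerical semigroup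
generated by `{a^{k−i}b^i : 0 ≤ i ≤ k}` equals `ab·σ(a,b;k−1) − σ(a,b;k)`, where
`σ(a,b;m) = Σ_{i=0}^m a^{m−i}b^i`. -/
theorem geometric_frobenius (a b k : ℕ) (ha : 1 < a) (hb : 1 < b) (hab : Nat.Coprime a b)
    (hk : 1 ≤ k)
    (F : ℤ)
    (hF : F = (a : ℤ) * (b : ℤ) * (∑ i ∈ Finset.range k, (a : ℤ) ^ (k - 1 - i) * (b : ℤ) ^ i) -
        ∑ i ∈ Finset.range (k + 1), (a : ℤ) ^ (k - i) * (b : ℤ) ^ i) :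
    (¬ ∃ c : Fin (k + 1) → ℕ,
        F = ∑ i : Fin (k + 1), (c i : ℤ) * ((a : ℤ) ^ (k - (i : ℕ)) * (b : ℤ) ^ (i : ℕ))) ∧
      ∀ m : ℤ, F < m →
        ∃ c : Fin (k + 1) → ℕ,
          m = ∑ i : Fin (k + 1), (c i : ℤ) * ((a : ℤ) ^ (k - (i : ℕ)) * (b : ℤ) ^ (i : ℕ)) :=
  geometric_frobenius_general a b k ha hab F hF
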